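/- There exist a finite connected simple graph G = (V,E), the edge set T ⊆ E of a spanning tree of G in which every tree edge is covered by at least one non-tree edge, and a bijection σ_g : E∖T → {1,…,|E∖T|} that is a greedy ordering — meaning that for every i, the non-tree edge σ_g⁻¹(i) maximizes, among all non-tree edges not in {σ_g⁻¹(1),…,σ_g⁻¹(i−1)}, the number of tree edges it covers that are not covered by any of σ_g⁻¹(1),…,σ_g⁻¹(i−1) — such that ∑_{e∈T} min{σ_g(s) : s ∈ E∖T covers e} ≥ (7/6) · min_σ ∑_{e∈T} min{σ(s) : s ∈ E∖T covers e}, where the minimum on the right is over all bijections σ : E∖T → {1,…,|E∖T|}. In particular, the greedy algorithm does not always find an optimal solution to the Minimum Reconnection Time problem. -/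

import Mathlib

/-- A non-tree edge `s` covers a tree edge `e` with respect to the spanning tree edge
set `T` if the spanning subgraph with edge set `(T ∖ {e}) ∪ {s}` is connected
(equivalently, is again a spanning tree). -/
def covers {V : Type} (T : Set (Sym2 V)) (s e : Sym2 V) : Prop :=
  (SimpleGraph.fromEdgeSet ((T \ {e}) ∪ {s})).Connected

/-!
Take the root `r = 0` with two paths `r - v₁ - v₂` and `r - v₃ - v₄` (`vᵢ = i`) as spanning tree
and non-tree edges `{v₁, v₃}`, `{r, v₂}`, `{r, v₄}`. A non-tree edge covers exactly the tree edges
of its fundamental cycle: `{v₁, v₃}` covers `{r, v₁}` and `{r, v₃}`, while `{r, v₂}` and `{r, v₄}`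
cover the two edges of their path. As every non-tree edge covers two tree edges, greedy may start
with `{v₁, v₃}`; it then pays `1 + 1 + 2 + 3 = 7`, while the order `{r, v₂}, {r, v₄}, {v₁, v₃}`
pays `1 + 1 + 2 + 2 = 6`.
-/

open SimpleGraph Finset

theorem Nat.sInf_setOf_exists_mem_and_eq {ι : Type*} (S : Finset ι) (P : ι → Prop)
    [DecidablePred P] (σ : ι → ℕ) :
    sInf {n | ∃ s ∈ S, P s ∧ σ s = n} = ((S.filter P).image σ).min.untopD 0 := by
  have hset : {n | ∃ s ∈ S, P s ∧ σ s = n} = ↑((S.filter P).image σ) := by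
    ext n
    simp [and_assoc]
  rw [hset]
  rcases ((S.filter P).image σ).eq_empty_or_nonempty with hempty | hne
  · simp [hempty]
  · rw [hne.csInf_eq_min', ← coe_min' hne, WithTop.untopD_coe]

theorem Finset.bijOn_of_image_eq_of_card_eq {α β : Type*} [DecidableEq β] {f : α → β}
    {s : Finset α} {t : Finset β} (himage : s.image f = t) (hcard : #t = #s) :
    Set.BijOn f s t := by
  subst himage
  exact ⟨fun a ha ↦ mem_coe.2 (Finset.mem_image_of_mem f ha), card_image_iff.1 hcard,
    fun b hb ↦ by simpa using hb⟩

theorem SimpleGraph.edgeSet_fromEdgeSet_of_not_isDiag {V : Type*} (F : Finset (Sym2 V))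
    (hF : ∀ e ∈ F, ¬ e.IsDiag) : (fromEdgeSet (F : Set (Sym2 V))).edgeSet = F :=
  (edgeSet_eq_iff _ _).2 ⟨rfl, Set.disjoint_left.2 hF⟩

section MRT

variable {V : Type}

instance [Fintype V] [DecidableEq V] (T : Finset (Sym2 V)) (s e : Sym2 V) :
    Decidable (covers (T : Set (Sym2 V)) s e) :=
  inferInstanceAs (Decidable (SimpleGraph.Connected _))

-- An uncovered tree edge contributes `sInf ∅ = 0`.
noncomputable def mrtCost (T S : Finset (Sym2 V)) (σ : Sym2 V → ℕ) : ℕ :=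
  ∑ e ∈ T, sInf {n : ℕ | ∃ s ∈ S, covers (T : Set (Sym2 V)) s e ∧ σ s = n}

noncomputable def mrtOptimum (T S : Finset (Sym2 V)) : ℕ :=
  sInf {m | ∃ σ : Sym2 V → ℕ, Set.BijOn σ ↑S ↑(Icc 1 #S) ∧ m = mrtCost T S σ}

theorem mrtOptimum_le_mrtCost {T S : Finset (Sym2 V)} {σ : Sym2 V → ℕ}
    (hσ : Set.BijOn σ ↑S ↑(Icc 1 #S)) : mrtOptimum T S ≤ mrtCost T S σ :=
  Nat.sInf_le ⟨σ, hσ, rfl⟩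

theorem mrtCost_eq_sum_min [Fintype V] [DecidableEq V] (T S : Finset (Sym2 V))
    (σ : Sym2 V → ℕ) :
    mrtCost T S σ =
      ∑ e ∈ T, ((S.filter (covers (T : Set (Sym2 V)) · e)).image σ).min.untopD 0 := by
  simp only [mrtCost, Nat.sInf_setOf_exists_mem_and_eq]

def newlyCovered (T S : Finset (Sym2 V)) (σ : Sym2 V → ℕ) (i : ℕ) (s : Sym2 V) :
    Set (Sym2 V) :=
  {e | e ∈ T ∧ covers (T : Set (Sym2 V)) s e ∧
    ∀ s' ∈ S, σ s' < i → ¬ covers (T : Set (Sym2 V)) s' e}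

def IsGreedyOrder (T S : Finset (Sym2 V)) (σ : Sym2 V → ℕ) : Prop :=
  ∀ i ∈ Icc 1 #S, ∀ g ∈ S, σ g = i → ∀ s ∈ S, i ≤ σ s →
    (newlyCovered T S σ i s).ncard ≤ (newlyCovered T S σ i g).ncard

theorem ncard_newlyCovered [Fintype V] [DecidableEq V] (T S : Finset (Sym2 V))
    (σ : Sym2 V → ℕ) (i : ℕ) (s : Sym2 V) :
    (newlyCovered T S σ i s).ncard = #(T.filter fun e ↦ covers (T : Set (Sym2 V)) s e ∧
      ∀ s' ∈ S, σ s' < i → ¬ covers (T : Set (Sym2 V)) s' e) := by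
  rw [← Set.ncard_coe_finset, coe_filter]
  rfl

end MRT

namespace GreedyMRTCounterexample

def witnessTree : Finset (Sym2 (Fin 5)) := {s(0, 1), s(1, 2), s(0, 3), s(3, 4)}

def witnessNonTree : Finset (Sym2 (Fin 5)) := {s(1, 3), s(0, 2), s(0, 4)}

def witnessGraph : SimpleGraph (Fin 5) :=
  fromEdgeSet ↑(witnessTree ∪ witnessNonTree)

def greedyOrder (x : Sym2 (Fin 5)) : ℕ :=
  if x = s(1, 3) then 1 else if x = s(0, 2) then 2 else if x = s(0, 4) then 3 else 0

def optimalOrder (x : Sym2 (Fin 5)) : ℕ :=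
  if x = s(0, 2) then 1 else if x = s(0, 4) then 2 else if x = s(1, 3) then 3 else 0

theorem edgeSet_witnessGraph :
    witnessGraph.edgeSet = ↑(witnessTree ∪ witnessNonTree) :=
  edgeSet_fromEdgeSet_of_not_isDiag _ (by decide)

theorem witnessGraph_connected : witnessGraph.Connected := by
  unfold witnessGraph
  decide +kernel

theorem witnessTree_subset_edgeSet : ↑witnessTree ⊆ witnessGraph.edgeSet := by
  rw [edgeSet_witnessGraph]
  exact coe_subset.2 subset_union_left

theorem witnessTree_isTree : (fromEdgeSet (witnessTree : Set (Sym2 (Fin 5)))).IsTree := by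
  rw [isTree_iff_connected_and_card, edgeSet_fromEdgeSet_of_not_isDiag _ (by decide),
    Nat.card_coe_set_eq, Set.ncard_coe_finset, Nat.card_eq_fintype_card]
  exact ⟨by decide +kernel, rfl⟩

theorem witnessNonTree_eq : ↑witnessNonTree = witnessGraph.edgeSet \ ↑witnessTree := by
  rw [edgeSet_witnessGraph, ← coe_sdiff, coe_inj]
  decide

theorem witnessTree_covered :
    ∀ e ∈ witnessTree, ∃ s ∈ witnessNonTree, covers (witnessTree : Set (Sym2 (Fin 5))) s e := by
  decide +kernel

theorem greedyOrder_bijOn :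
    Set.BijOn greedyOrder ↑witnessNonTree ↑(Icc 1 #witnessNonTree) :=
  Finset.bijOn_of_image_eq_of_card_eq (by decide) (by decide)

theorem optimalOrder_bijOn :
    Set.BijOn optimalOrder ↑witnessNonTree ↑(Icc 1 #witnessNonTree) :=
  Finset.bijOn_of_image_eq_of_card_eq (by decide) (by decide)

theorem greedyOrder_isGreedy : IsGreedyOrder witnessTree witnessNonTree greedyOrder := by
  unfold IsGreedyOrder
  simp only [ncard_newlyCovered]
  decide +kernel

theorem mrtCost_greedyOrder : mrtCost witnessTree witnessNonTree greedyOrder = 7 := by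
  rw [mrtCost_eq_sum_min]
  decide +kernel

theorem mrtCost_optimalOrder : mrtCost witnessTree witnessNonTree optimalOrder = 6 := by
  rw [mrtCost_eq_sum_min]
  decide +kernel

end GreedyMRTCounterexample

open GreedyMRTCounterexample in
/-- There is a finite connected graph with a spanning tree, every tree edge covered by
some non-tree edge, and a greedy ordering `σg` of the non-tree edges (at each step a
remaining non-tree edge covering the most not-yet-covered tree edges is chosen) whose
MRT objective is at least `7/6` times the optimum over all orderings. -/
theorem stmt_15 :
    ∃ (V : Type) (_ : Fintype V) (G : SimpleGraph V)
      (T S : Finset (Sym2 V)) (σg : Sym2 V → ℕ),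
      G.Connected ∧ (T : Set (Sym2 V)) ⊆ G.edgeSet ∧
      (SimpleGraph.fromEdgeSet (T : Set (Sym2 V))).IsTree ∧
      (S : Set (Sym2 V)) = G.edgeSet \ (T : Set (Sym2 V)) ∧
      (∀ e ∈ T, ∃ s ∈ S, covers (T : Set (Sym2 V)) s e) ∧
      Set.BijOn σg (S : Set (Sym2 V)) ((Finset.Icc 1 S.card : Finset ℕ) : Set ℕ) ∧
      (∀ i ∈ Finset.Icc 1 S.card, ∀ g ∈ S, σg g = i → ∀ s ∈ S, i ≤ σg s →
        {e : Sym2 V | e ∈ T ∧ covers (T : Set (Sym2 V)) s e ∧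
            ∀ s' ∈ S, σg s' < i → ¬ covers (T : Set (Sym2 V)) s' e}.ncard ≤
          {e : Sym2 V | e ∈ T ∧ covers (T : Set (Sym2 V)) g e ∧
            ∀ s' ∈ S, σg s' < i → ¬ covers (T : Set (Sym2 V)) s' e}.ncard) ∧
      7 * sInf {m : ℕ | ∃ σ : Sym2 V → ℕ,
            Set.BijOn σ (S : Set (Sym2 V)) ((Finset.Icc 1 S.card : Finset ℕ) : Set ℕ) ∧
            m = ∑ e ∈ T, sInf {n : ℕ |
                  ∃ s ∈ S, covers (T : Set (Sym2 V)) s e ∧ σ s = n}} ≤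
        6 * ∑ e ∈ T, sInf {n : ℕ | ∃ s ∈ S, covers (T : Set (Sym2 V)) s e ∧ σg s = n} := by
  refine ⟨Fin 5, inferInstance, witnessGraph, witnessTree, witnessNonTree, greedyOrder,
    witnessGraph_connected, witnessTree_subset_edgeSet, witnessTree_isTree, witnessNonTree_eq,
    witnessTree_covered, greedyOrder_bijOn, greedyOrder_isGreedy, ?_⟩
  change 7 * mrtOptimum witnessTree witnessNonTree ≤
    6 * mrtCost witnessTree witnessNonTree greedyOrder
  calc 7 * mrtOptimum witnessTree witnessNonTree
      ≤ 7 * mrtCost witnessTree witnessNonTree optimalOrder :=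
        Nat.mul_le_mul_left 7 (mrtOptimum_le_mrtCost optimalOrder_bijOn)
    _ = 6 * mrtCost witnessTree witnessNonTree greedyOrder := by
        rw [mrtCost_optimalOrder, mrtCost_greedyOrder]
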